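/- The zigzag digraph Z is congruence 3-permutable via explicit polymorphisms: there exist ternary polymorphisms p1, p2 of Z satisfying p1(x,y,y)=x, p2(x,x,y)=y, and p1(x,x,y)=p2(x,y,y) for all vertices x,y of Z. Concretely, p1(x,y,z) equals 01 if 01∈{x,y,z} and y≠z; equals 10 if 10∈{x,y,z}, 01∉{x,y,z} and y≠z; and equals x otherwise. p2(x,y,z) equals 01 if 01∈{x,y,z} and x≠y; equals 10 if 10∈{x,y,z}, 01∉{x,y,z} and x≠y; equals z if x=y; and equals x otherwise. Both p1 and p2 are polymorphisms of Z and the three identities hold. -/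
import Mathlib


/-- The zigzag Z: vertices 0 = 00, 1 = 10, 2 = 01, 3 = 11,
    edges 00→01, 10→01, 10→11. -/
def zigzagE2 : Fin 4 → Fin 4 → Prop := fun a b =>
  (a = 0 ∧ b = 2) ∨ (a = 1 ∧ b = 2) ∨ (a = 1 ∧ b = 3)

/-- p1(x,y,z) = 01 if 01∈{x,y,z} and y≠z; 10 if 10∈{x,y,z}, 01∉{x,y,z}, y≠z; x otherwise.
    (01 is vertex 2, 10 is vertex 1.) -/
def p1 (x y z : Fin 4) : Fin 4 :=
  if (x = 2 ∨ y = 2 ∨ z = 2) ∧ y ≠ z then 2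
  else if (x = 1 ∨ y = 1 ∨ z = 1) ∧ ¬(x = 2 ∨ y = 2 ∨ z = 2) ∧ y ≠ z then 1
  else x

/-- p2(x,y,z) = 01 if 01∈{x,y,z} and x≠y; 10 if 10∈{x,y,z}, 01∉{x,y,z}, x≠y;
    z if x=y; x otherwise. -/
def p2 (x y z : Fin 4) : Fin 4 :=
  if (x = 2 ∨ y = 2 ∨ z = 2) ∧ x ≠ y then 2
  else if (x = 1 ∨ y = 1 ∨ z = 1) ∧ ¬(x = 2 ∨ y = 2 ∨ z = 2) ∧ x ≠ y then 1
  else if x = y then z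
  else x

theorem stmt2 :
    (∀ a1 a2 a3 b1 b2 b3 : Fin 4, zigzagE2 a1 b1 → zigzagE2 a2 b2 → zigzagE2 a3 b3 →
      zigzagE2 (p1 a1 a2 a3) (p1 b1 b2 b3)) ∧
    (∀ a1 a2 a3 b1 b2 b3 : Fin 4, zigzagE2 a1 b1 → zigzagE2 a2 b2 → zigzagE2 a3 b3 →
      zigzagE2 (p2 a1 a2 a3) (p2 b1 b2 b3)) ∧
    (∀ x y : Fin 4, p1 x y y = x) ∧
    (∀ x y : Fin 4, p2 x x y = y) ∧
    (∀ x y : Fin 4, p1 x x y = p2 x y y) := by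
  refine ⟨?_, ?_, ?_, ?_, ?_⟩
  · intro a1 a2 a3 b1 b2 b3 h1 h2 h3
    unfold zigzagE2 at h1 h2 h3 ⊢
    rcases h1 with ⟨rfl,rfl⟩|⟨rfl,rfl⟩|⟨rfl,rfl⟩ <;>
    rcases h2 with ⟨rfl,rfl⟩|⟨rfl,rfl⟩|⟨rfl,rfl⟩ <;>
    rcases h3 with ⟨rfl,rfl⟩|⟨rfl,rfl⟩|⟨rfl,rfl⟩ <;>
    simp only [p1] <;> decide
  · intro a1 a2 a3 b1 b2 b3 h1 h2 h3
    unfold zigzagE2 at h1 h2 h3 ⊢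
    rcases h1 with ⟨rfl,rfl⟩|⟨rfl,rfl⟩|⟨rfl,rfl⟩ <;>
    rcases h2 with ⟨rfl,rfl⟩|⟨rfl,rfl⟩|⟨rfl,rfl⟩ <;>
    rcases h3 with ⟨rfl,rfl⟩|⟨rfl,rfl⟩|⟨rfl,rfl⟩ <;>
    simp only [p2] <;> decide
  · simp only [p1]; decide
  · simp only [p2]; decide
  · simp only [p1, p2]; decide
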